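/- Suppose char F is odd. Let C be a self-dual 2-quasi-cyclic code of length 2n over F with Goursat data (C1, C2, C12, g). Then C is a consta-dihedral code if and only if C̄1 = C2. -/

import Mathlib

/-!
Self-duality turns orthogonality into ring identities: the coefficients of `p.1 * bar q.1 + p.2 * bar q.2`
are inner products of translates of `p` with `q`, so this sum vanishes for `p, q ∈ C`. Pairing `(c, c g)`
with `(c₁, 0)` gives `C12 · C̄1 = 0`; with this, `e - e ē` is orthogonal to `C`, hence lies in
`C1 ∩ C12 = 0`, so `ē = e`, and pairing `(e, g)` with itself gives `g ḡ = -e`. Thus for `c ∈ C12` the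
element `d = -c̄ ḡ ∈ C12` satisfies `d g = c̄`, so the image `(-c̄₂ + d, c̄₁ + d g)` of `(c₁ + c, c₂ + c g)`
lies in `C` as soon as `C̄1 = C2`. Conversely, applying the map to `C1 × 0` and `0 × C2` and using
`C1 ∩ C12 = C2 ∩ C12 = 0` gives `C̄1 ⊆ C2` and `C̄2 ⊆ C1`.
-/

noncomputable section

/-- The cyclic group of order `n`, written multiplicatively. -/
abbrev Zn (n : ℕ) := Multiplicative (ZMod n)

/-- The group algebra `FH` of the cyclic group of order `n` over `F`. -/
abbrev FH (F : Type*) [Field F] (n : ℕ) := MonoidAlgebra F (Zn n)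

variable {F : Type*} [Field F] [Fintype F] {n : ℕ} [NeZero n]

/-- The "bar" map of the group algebra, induced by `x ↦ x⁻¹`. -/
def bar (a : FH F n) : FH F n := MonoidAlgebra.ofCoeff (Finsupp.equivMapDomain (Equiv.inv (Zn n)) a.coeff)

/-- The inner product on `FH`: `⟨a, b⟩ = ∑ a_g * b_g`. -/
def innerFH (a b : FH F n) : F := ∑ g : Zn n, a.coeff g * b.coeff g

/-- The inner product on `FH × FH`. -/
def innerFH2 (a b : FH F n × FH F n) : F := innerFH a.1 b.1 + innerFH a.2 b.2

/-- `Ĉ₁₂ = {(c, c·g) : c ∈ C12}` as an `FH`-submodule of `FH × FH`. -/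
def hatSub (C12 : Ideal (FH F n)) (g : FH F n) : Submodule (FH F n) (FH F n × FH F n) :=
  Submodule.map (LinearMap.prod LinearMap.id (LinearMap.mulRight (FH F n) g)) C12

/-- A 2-quasi-cyclic code (an `FH`-submodule of `FH × FH`) is self-dual if it
equals its orthogonal complement. -/
def IsSelfDual (C : Submodule (FH F n) (FH F n × FH F n)) : Prop :=
  (C : Set (FH F n × FH F n)) = {v | ∀ c ∈ C, innerFH2 v c = 0}

/-- A 2-quasi-cyclic code is a dihedral code iff it is invariant under
`(a, a') ↦ (ā', ā)` (left multiplication by `y` in the dihedral group algebra). -/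
def IsDihedral (C : Submodule (FH F n) (FH F n × FH F n)) : Prop :=
  ∀ p ∈ C, (bar p.2, bar p.1) ∈ C

/-- A 2-quasi-cyclic code is a consta-dihedral code iff it is invariant under
`(a, a') ↦ (−ā', ā)` (left multiplication by `ỹ` in the consta-dihedral algebra). -/
def IsConstaDihedral (C : Submodule (FH F n) (FH F n × FH F n)) : Prop :=
  ∀ p ∈ C, (-(bar p.2), bar p.1) ∈ C

omit [Fintype F]

section Goursat

variable {R : Type*} [CommRing R] {C1 C2 C12 : Ideal R} {g : R}

variable (C1 C2 C12 g) in
def goursatCode : Submodule R (R × R) :=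
  Submodule.prod C1 C2 ⊔ Submodule.map (LinearMap.id.prod (LinearMap.mulRight R g)) C12

theorem mem_goursatCode {p : R × R} :
    p ∈ goursatCode C1 C2 C12 g ↔ ∃ c1 ∈ C1, ∃ c2 ∈ C2, ∃ c ∈ C12, p = (c1 + c, c2 + c * g) := by
  simp only [goursatCode, Submodule.mem_sup, Submodule.mem_map]
  constructor
  · rintro ⟨y, hy, _, ⟨c, hc, rfl⟩, rfl⟩
    exact ⟨y.1, hy.1, y.2, hy.2, c, hc, rfl⟩
  · rintro ⟨c1, hc1, c2, hc2, c, hc, rfl⟩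
    exact ⟨(c1, c2), ⟨hc1, hc2⟩, (c, c * g), ⟨c, hc, rfl⟩, rfl⟩

theorem mk_mem_goursatCode {c1 c2 : R} (hc1 : c1 ∈ C1) (hc2 : c2 ∈ C2) :
    (c1, c2) ∈ goursatCode C1 C2 C12 g :=
  mem_goursatCode.2 ⟨c1, hc1, c2, hc2, 0, zero_mem _, by simp⟩

theorem mk_mul_mem_goursatCode {c : R} (hc : c ∈ C12) : (c, c * g) ∈ goursatCode C1 C2 C12 g :=
  mem_goursatCode.2 ⟨0, zero_mem _, 0, zero_mem _, c, hc, by simp⟩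

theorem mem_of_mk_zero_mem_goursatCode (h212 : C2 ⊓ C12 = ⊥)
    (hg : ∀ c ∈ C12, c * g = 0 → c = 0) {a : R} (ha : (a, 0) ∈ goursatCode C1 C2 C12 g) :
    a ∈ C1 := by
  obtain ⟨c1, hc1, c2, hc2, c, hc, hac⟩ := mem_goursatCode.1 ha
  obtain ⟨rfl, hcg⟩ := Prod.mk.inj hac
  have : c * g ∈ C2 ⊓ C12 :=
    ⟨by simpa [eq_neg_of_add_eq_zero_right hcg.symm] using neg_mem hc2, C12.mul_mem_right g hc⟩
  rw [h212, Ideal.mem_bot] at this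
  simpa [hg c hc this] using hc1

theorem mem_of_zero_mk_mem_goursatCode (h112 : C1 ⊓ C12 = ⊥) {b : R}
    (hb : (0, b) ∈ goursatCode C1 C2 C12 g) : b ∈ C2 := by
  obtain ⟨c1, hc1, c2, hc2, c, hc, hbc⟩ := mem_goursatCode.1 hb
  obtain ⟨h0, rfl⟩ := Prod.mk.inj hbc
  have : c ∈ C1 ⊓ C12 := ⟨by simpa [eq_neg_of_add_eq_zero_right h0.symm] using neg_mem hc1, hc⟩
  rw [h112, Ideal.mem_bot] at this
  simpa [this] using hc2

end Goursat

section Bar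

omit [NeZero n]

theorem bar_eq_domCongr (a : FH F n) : bar a = MonoidAlgebra.domCongr F F (MulEquiv.inv (Zn n)) a := by
  ext g
  rw [MonoidAlgebra.coeff_domCongr]
  rfl

@[simp]
theorem coeff_bar (a : FH F n) (g : Zn n) : (bar a).coeff g = a.coeff g⁻¹ := rfl

@[simp]
theorem bar_bar (a : FH F n) : bar (bar a) = a := by
  ext g
  simp

@[simp]
theorem bar_mul (a b : FH F n) : bar (a * b) = bar a * bar b := by
  simp only [bar_eq_domCongr, map_mul]

@[simp]
theorem bar_add (a b : FH F n) : bar (a + b) = bar a + bar b := by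
  simp only [bar_eq_domCongr, map_add]

@[simp]
theorem bar_zero : bar (0 : FH F n) = 0 := by
  simp only [bar_eq_domCongr, map_zero]

end Bar

section SelfDual

open MonoidAlgebra

theorem coeff_mul_bar (a b : FH F n) (s : Zn n) :
    (a * bar b).coeff s = innerFH (single s⁻¹ 1 * a) b := by
  rw [coeff_mul_apply_left, innerFH, Finsupp.sum_fintype _ _ (by simp)]
  refine Fintype.sum_equiv (Equiv.mulLeft s⁻¹) _ _ fun g => ?_
  simp [coeff_single_mul_apply, mul_inv_rev]

theorem innerFH_eq_coeff_mul_bar (a b : FH F n) : innerFH a b = (a * bar b).coeff 1 := by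
  simpa [← one_def] using (coeff_mul_bar a b 1).symm

variable {C : Submodule (FH F n) (FH F n × FH F n)}

theorem IsSelfDual.innerFH2_eq_zero (hsd : IsSelfDual C) {p q : FH F n × FH F n} (hp : p ∈ C)
    (hq : q ∈ C) : innerFH2 p q = 0 := by
  have hp' : p ∈ {v | ∀ c ∈ C, innerFH2 v c = 0} := hsd ▸ hp
  exact hp' q hq

theorem IsSelfDual.mem_of_forall_innerFH2_eq_zero (hsd : IsSelfDual C) {p : FH F n × FH F n}
    (hp : ∀ q ∈ C, innerFH2 p q = 0) : p ∈ C := by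
  rw [← SetLike.mem_coe, hsd]
  exact hp

theorem IsSelfDual.mul_bar_add_mul_bar_eq_zero (hsd : IsSelfDual C) {p q : FH F n × FH F n}
    (hp : p ∈ C) (hq : q ∈ C) : p.1 * bar q.1 + p.2 * bar q.2 = 0 := by
  ext s
  simpa [coeff_mul_bar, innerFH2] using hsd.innerFH2_eq_zero (C.smul_mem (single s⁻¹ 1) hp) hq

theorem IsSelfDual.mk_zero_mem (hsd : IsSelfDual C) {a : FH F n}
    (ha : ∀ q ∈ C, a * bar q.1 = 0) : (a, 0) ∈ C :=
  hsd.mem_of_forall_innerFH2_eq_zero fun q hq => by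
    simp [innerFH2, innerFH_eq_coeff_mul_bar, ha q hq]

end SelfDual

section ConstaDihedral

variable {C1 C2 C12 : Ideal (FH F n)} {e g : FH F n}

theorem bar_eq_self_of_isSelfDual (hsd : IsSelfDual (goursatCode C1 C2 C12 g))
    (h112 : C1 ⊓ C12 = ⊥) (h212 : C2 ⊓ C12 = ⊥) (hg : ∀ c ∈ C12, c * g = 0 → c = 0)
    (heC : e ∈ C12) (hid : ∀ c ∈ C12, e * c = c) : bar e = e := by
  have hC12_mul_bar_C1 : ∀ c ∈ C12, ∀ c1 ∈ C1, c * bar c1 = 0 := fun c hc c1 hc1 => by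
    simpa using hsd.mul_bar_add_mul_bar_eq_zero (mk_mul_mem_goursatCode hc)
      (mk_mem_goursatCode hc1 (zero_mem C2))
  set c0 := e - e * bar e
  have hc0 : c0 ∈ C12 := sub_mem heC (C12.mul_mem_right _ heC)
  have hc0_mul : c0 * bar e = 0 := by
    have hidem : bar e * bar e = bar e := by rw [← bar_mul, hid e heC]
    linear_combination (-e) * hidem
  have hc0_mem : (c0, 0) ∈ goursatCode C1 C2 C12 g := hsd.mk_zero_mem fun q hq => by
    obtain ⟨c1, hc1, c2, hc2, c, hc, rfl⟩ := mem_goursatCode.1 hq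
    rw [← hid c hc]
    simp [mul_add, hC12_mul_bar_C1 c0 hc0 c1 hc1, ← mul_assoc, hc0_mul]
  have hc0_eq : c0 ∈ C1 ⊓ C12 := ⟨mem_of_mk_zero_mem_goursatCode h212 hg hc0_mem, hc0⟩
  rw [h112, Ideal.mem_bot, sub_eq_zero] at hc0_eq
  calc bar e = bar (e * bar e) := by rw [← hc0_eq]
    _ = e * bar e := by rw [bar_mul, bar_bar, mul_comm]
    _ = e := hc0_eq.symm

theorem mul_bar_self_eq_neg_of_isSelfDual (hsd : IsSelfDual (goursatCode C1 C2 C12 g))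
    (hbar : bar e = e) (heC : e ∈ C12) (hid : ∀ c ∈ C12, e * c = c) (hg : g ∈ C12) :
    g * bar g = -e := by
  have h := hsd.mul_bar_add_mul_bar_eq_zero (mk_mul_mem_goursatCode heC) (mk_mul_mem_goursatCode heC)
  simp only [hid g hg, hbar, hid e heC] at h
  exact eq_neg_of_add_eq_zero_right h

omit [NeZero n] in
theorem IsConstaDihedral.bar_image_eq (hcd : IsConstaDihedral (goursatCode C1 C2 C12 g))
    (h112 : C1 ⊓ C12 = ⊥) (h212 : C2 ⊓ C12 = ⊥) (hg : ∀ c ∈ C12, c * g = 0 → c = 0) :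
    bar '' (C1 : Set (FH F n)) = C2 := by
  refine Set.Subset.antisymm ?_ fun c2 hc2 => ?_
  · rintro _ ⟨c1, hc1, rfl⟩
    exact mem_of_zero_mk_mem_goursatCode h112
      (by simpa using hcd _ (mk_mem_goursatCode hc1 (zero_mem C2)))
  · have h := mem_of_mk_zero_mem_goursatCode h212 hg
      (by simpa using hcd _ (mk_mem_goursatCode (zero_mem C1) hc2))
    exact ⟨bar c2, by simpa using neg_mem h, bar_bar c2⟩

omit [NeZero n] in
theorem isConstaDihedral_goursatCode (hbar : bar '' (C1 : Set (FH F n)) = C2)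
    (hid : ∀ c ∈ C12, e * c = c) (hbarC12 : ∀ c ∈ C12, bar c ∈ C12) (hg : bar g * g = -e) :
    IsConstaDihedral (goursatCode C1 C2 C12 g) := by
  intro p hp
  obtain ⟨c1, hc1, c2, hc2, c, hc, rfl⟩ := mem_goursatCode.1 hp
  have hc1' : bar c1 ∈ C2 := by
    rw [← SetLike.mem_coe, ← hbar]
    exact ⟨c1, hc1, rfl⟩
  have hc2' : bar c2 ∈ C1 := by
    rw [← SetLike.mem_coe, ← hbar] at hc2
    obtain ⟨u, hu, rfl⟩ := hc2
    simpa using hu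
  have hdg : -(bar c * bar g) * g = bar c := by
    calc -(bar c * bar g) * g = -(bar c * (bar g * g)) := by ring
      _ = e * bar c := by rw [hg, mul_neg, neg_neg, mul_comm]
      _ = bar c := hid _ (hbarC12 c hc)
  refine mem_goursatCode.2 ⟨-bar c2, neg_mem hc2', bar c1, hc1', -(bar c * bar g),
    neg_mem (C12.mul_mem_right _ (hbarC12 c hc)), ?_⟩
  refine Prod.ext ?_ ?_
  · simp only [bar_add, bar_mul]
    ring
  · simp only [bar_add, hdg]

end ConstaDihedral

theorem self_dual_consta_dihedral_iff_odd_char_general (F : Type*) [Field F]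
    (n : ℕ) [NeZero n]
    (C : Submodule (FH F n) (FH F n × FH F n))
    (C1 C2 C12 : Ideal (FH F n)) (e g h : FH F n)
    (h112 : C1 ⊓ C12 = ⊥) (h212 : C2 ⊓ C12 = ⊥)
    (heC : e ∈ C12) (hid : ∀ c ∈ C12, e * c = c)
    (hg : g ∈ C12) (hgh : g * h = e)
    (hC : C = Submodule.prod C1 C2 ⊔ hatSub C12 g)
    (hsd : IsSelfDual C) :
    IsConstaDihedral C ↔ bar '' (C1 : Set (FH F n)) = (C2 : Set (FH F n)) := by
  obtain rfl : C = goursatCode C1 C2 C12 g := hC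
  have hcancel : ∀ c ∈ C12, c * g = 0 → c = 0 := fun c hc hcg => by
    calc c = c * g * h := by rw [mul_assoc, hgh, mul_comm, hid c hc]
      _ = 0 := by rw [hcg, zero_mul]
  have hbar_e : bar e = e := bar_eq_self_of_isSelfDual hsd h112 h212 hcancel heC hid
  have hbar_mem : ∀ c ∈ C12, bar c ∈ C12 := fun c hc => by
    rw [← hid c hc, bar_mul, hbar_e]
    exact C12.mul_mem_right _ heC
  have hgg : g * bar g = -e := mul_bar_self_eq_neg_of_isSelfDual hsd hbar_e heC hid hg
  exact ⟨fun hcd => hcd.bar_image_eq h112 h212 hcancel,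
    fun hbar => isConstaDihedral_goursatCode hbar hid hbar_mem (by rw [mul_comm, hgg])⟩

/-- (char F odd.) A self-dual 2-quasi-cyclic code `C` with Goursat data
`(C1, C2, C12, g)` is a consta-dihedral code iff `C̄1 = C2`. -/
theorem self_dual_consta_dihedral_iff_odd_char (F : Type*) [Field F] [Fintype F]
    (n : ℕ) [NeZero n]
    (hn : 1 < n) (hcop : Nat.Coprime n (Fintype.card F))
    (hchar : ringChar F ≠ 2)
    (C : Submodule (FH F n) (FH F n × FH F n))
    (C1 C2 C12 : Ideal (FH F n)) (e g h : FH F n)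
    (h112 : C1 ⊓ C12 = ⊥) (h212 : C2 ⊓ C12 = ⊥)
    (heC : e ∈ C12) (hspan : C12 = Ideal.span {e}) (hid : ∀ c ∈ C12, e * c = c)
    (hg : g ∈ C12) (hh : h ∈ C12) (hgh : g * h = e)
    (hC : C = Submodule.prod C1 C2 ⊔ hatSub C12 g)
    (hsd : IsSelfDual C) :
    IsConstaDihedral C ↔ bar '' (C1 : Set (FH F n)) = (C2 : Set (FH F n)) :=
  self_dual_consta_dihedral_iff_odd_char_general F n C C1 C2 C12 e g h h112 h212 heC hid hg hgh hC
    hsd
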